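/- Let R be a commutative ring and r, g ∈ R such that the image of r in R/(g) is a nonzerodivisor. Then the canonical ring homomorphism R/(r·g) → (R/(g)) ×_{R/(g,r)} (R/(r)) is bijective onto the fiber product (injective, with image the pairs agreeing modulo (g, r)). -/

import Mathlib

/-- The canonical ring homomorphism `R ⧸ (r·g) →+* (R ⧸ (g)) × (R ⧸ (r))`. -/
def toFiberProdSpan {R : Type*} [CommRing R] (r g : R) :
    R ⧸ Ideal.span {r * g} →+* (R ⧸ Ideal.span {g}) × (R ⧸ Ideal.span {r}) :=
  Ideal.Quotient.lift (Ideal.span {r * g})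
    ((Ideal.Quotient.mk (Ideal.span {g})).prod (Ideal.Quotient.mk (Ideal.span {r})))
    (by
      intro a ha
      refine Prod.ext ?_ ?_
      · simpa [Ideal.Quotient.eq_zero_iff_mem] using
          Ideal.span_singleton_le_span_singleton.mpr ⟨r, mul_comm r g⟩ ha
      · simpa [Ideal.Quotient.eq_zero_iff_mem] using
          Ideal.span_singleton_le_span_singleton.mpr ⟨g, rfl⟩ ha)

/-- If the image of `r` in `R ⧸ (g)` is a nonzerodivisor, then the canonical map
`R ⧸ (r·g) → (R ⧸ (g)) ×_{R ⧸ (g, r)} (R ⧸ (r))` is injective with image the pairs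
agreeing modulo `(g, r)`. -/
theorem stmt2 {R : Type*} [CommRing R] (r g : R)
    (h : ∀ b : R, r * b ∈ Ideal.span {g} → b ∈ Ideal.span {g}) :
    Function.Injective (toFiberProdSpan r g) ∧
      Set.range (toFiberProdSpan r g) =
        {p : (R ⧸ Ideal.span {g}) × (R ⧸ Ideal.span {r}) |
          Ideal.Quotient.factor (S := Ideal.span {g}) (T := Ideal.span {g, r})
              (Ideal.span_mono (Set.singleton_subset_iff.mpr (by simp))) p.1 =
            Ideal.Quotient.factor (S := Ideal.span {r}) (T := Ideal.span {g, r})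
              (Ideal.span_mono (Set.singleton_subset_iff.mpr (by simp))) p.2} := by

  constructor
  · rw [injective_iff_map_eq_zero]
    intro x hx
    obtain ⟨a, rfl⟩ := Ideal.Quotient.mk_surjective x
    have h1 : (Ideal.Quotient.mk (Ideal.span {g})) a = 0 := congrArg Prod.fst hx
    have h2 : (Ideal.Quotient.mk (Ideal.span {r})) a = 0 := congrArg Prod.snd hx
    rw [Ideal.Quotient.eq_zero_iff_mem, Ideal.mem_span_singleton] at h1 h2
    obtain ⟨t, rfl⟩ := h2
    obtain ⟨u, hu⟩ := Ideal.mem_span_singleton.mp (h t (Ideal.mem_span_singleton.mpr h1))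
    rw [Ideal.Quotient.eq_zero_iff_mem, Ideal.mem_span_singleton]
    exact ⟨u, by rw [hu]; ring⟩
  · ext p
    constructor
    · rintro ⟨x, rfl⟩
      obtain ⟨a, rfl⟩ := Ideal.Quotient.mk_surjective x
      simp [toFiberProdSpan, Ideal.Quotient.factor]
    · rintro hp
      obtain ⟨a, ha⟩ := Ideal.Quotient.mk_surjective p.1
      obtain ⟨b, hb⟩ := Ideal.Quotient.mk_surjective p.2
      have : a - b ∈ Ideal.span ({g, r} : Set R) := by
        rw [← Ideal.Quotient.eq]
        have := hp
        simp only [Set.mem_setOf_eq, ← ha, ← hb] at this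
        simpa [Ideal.Quotient.factor] using this
      obtain ⟨u, v, huv⟩ := Ideal.mem_span_pair.mp this
      refine ⟨Ideal.Quotient.mk _ (a - u * g), ?_⟩
      have e1 : (Ideal.Quotient.mk (Ideal.span {g})) (a - u * g) = p.1 := by
        rw [← ha, Ideal.Quotient.eq]
        exact Ideal.mem_span_singleton.mpr ⟨-u, by ring⟩
      have e2 : (Ideal.Quotient.mk (Ideal.span {r})) (a - u * g) = p.2 := by
        rw [← hb, Ideal.Quotient.eq]
        refine Ideal.mem_span_singleton.mpr ⟨v, ?_⟩
        have : a - b = u * g + v * r := huv.symm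
        linear_combination this
      exact Prod.ext (by simpa [toFiberProdSpan] using e1) (by simpa [toFiberProdSpan] using e2)
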